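/- arXiv:2306.02704 — 2 statements merged into one kernel-verified Lean document; each statement's English description precedes it below -/
import Mathlib

section
/- Fix finite action sets $\mathcal{A}_A$ (agent) and $\mathcal{A}_P$ (principal), weights $w_i(\mathbf{p}_t) \in [0,1]$ with $\sum_{i \in \mathcal{A}_A} w_i(\mathbf{p}_t) = 1$ for each $t \in [T]$, vectors $\mathbf{h}_t, \mathbf{p}_t \in \Delta(\mathcal{A}_P)$, and a bilinear utility $U_P(\mathbf{h}, i) = \langle \mathbf{h}, U_P(\cdot, i)\rangle$ with $0 \le U_P(j,i) \le U_{\max}$. Define $n_T(i) = \sum_{t=1}^T w_i(\mathbf{p}_t)$, $\bar{\mathbf{h}}_T(i) = \frac{1}{n_T(i)} \sum_t w_i(\mathbf{p}_t) \mathbf{h}_t$, and $\bar{\mathbf{p}}_T(i)$ analogously. Suppose for each $i$ with $n_T(i) > 0$ that $\bar{\mathbf{p}}_T(i)$ lies in a set $P_i$ with $\max_{\mathbf{p} \in P_i} U_P(\mathbf{p}, i) \le V^\star$, and that $\frac{n_T(i)}{T}\|\bar{\mathbf{p}}_T(i) - \bar{\mathbf{h}}_T(i)\|_\infty \le r$.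 Then $\sum_{i \in \mathcal{A}_A} \sum_{t=1}^T w_i(\mathbf{p}_t) U_P(\mathbf{h}_t, i) \le V^\star T + U_{\max} \cdot |\mathcal{A}_P| \cdot |\mathcal{A}_A| \cdot r \cdot T$. -/
open Finset in
/-- Deterministic-tie-breaking core of the upper bound theorem: against calibrated
forecasts, the principal's cumulative utility is at most `V⋆ T` plus the accumulated
calibration error `Umax * m * k * r * T`. -/
theorem principal_utility_upper_bound
    (k m T : ℕ) (hT : 0 < T)
    (w : Fin k → Fin T → ℝ)              -- w i t = wᵢ(pₜ)
    (h p : Fin T → Fin m → ℝ)            -- principal strategies and forecasts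
    (U : Fin m → Fin k → ℝ)              -- principal utility matrix
    (Umax V r : ℝ) (hr : 0 ≤ r)
    (P : Fin k → Set (Fin m → ℝ))        -- best-response polytopes
    (hw0 : ∀ i t, 0 ≤ w i t) (hw1 : ∀ i t, w i t ≤ 1)
    (hwsum : ∀ t, ∑ i, w i t = 1)
    (hsimplex : ∀ t, (∀ j, 0 ≤ h t j) ∧ ∑ j, h t j = 1)
    (hU0 : ∀ j i, 0 ≤ U j i) (hUmax : ∀ j i, U j i ≤ Umax)
    -- average forecasts activating bin i lie in Pᵢ:
    (hpbar : ∀ i, 0 < ∑ t, w i t →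
      (fun j => (∑ t, w i t * p t j) / ∑ t, w i t) ∈ P i)
    -- Stackelberg value bounds the utility on each best-response polytope:
    (hV : ∀ i, ∀ q ∈ P i, ∑ j, q j * U j i ≤ V)
    -- ℓ∞ calibration error bound for each bin:
    (hcal : ∀ i, 0 < ∑ t, w i t → ∀ j,
      ((∑ t, w i t) / T) *
        |(∑ t, w i t * p t j) / (∑ t, w i t) -
         (∑ t, w i t * h t j) / (∑ t, w i t)| ≤ r) :
    ∑ i, ∑ t, w i t * (∑ j, h t j * U j i) ≤ V * T + Umax * m * k * r * T := by
  have hm : 0 < m := by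
    rcases Nat.eq_zero_or_pos m with hm0 | hm
    · exfalso
      have := (hsimplex ⟨0, hT⟩).2
      subst hm0
      simp at this
    · exact hm
  have hk : 0 < k := by
    rcases Nat.eq_zero_or_pos k with hk0 | hk
    · exfalso
      have := hwsum ⟨0, hT⟩
      subst hk0
      simp at this
    · exact hk
  have hUmax0 : 0 ≤ Umax := (hU0 ⟨0, hm⟩ ⟨0, hk⟩).trans (hUmax _ _)
  have hTpos : (0:ℝ) < T := by exact_mod_cast hT
  have key : ∀ i : Fin k, ∑ t, w i t * (∑ j, h t j * U j i)
      ≤ (∑ t, w i t) * V + Umax * m * (r * T) := by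
    intro i
    rcases eq_or_lt_of_le (Finset.sum_nonneg fun t _ => hw0 i t) with h0 | hpos
    · have hz : ∀ t ∈ Finset.univ, w i t = 0 :=
        (Finset.sum_eq_zero_iff_of_nonneg (fun t _ => hw0 i t)).mp h0.symm
      have : ∑ t, w i t * (∑ j, h t j * U j i) = 0 :=
        Finset.sum_eq_zero fun t ht => by rw [hz t ht, zero_mul]
      rw [this, ← h0]
      simp only [zero_mul, zero_add]
      positivity
    · have hswap : ∑ t, w i t * (∑ j, h t j * U j i)
          = ∑ j, (∑ t, w i t * h t j) * U j i := by
        simp_rw [Finset.mul_sum, Finset.sum_mul]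
        rw [Finset.sum_comm]
        exact Finset.sum_congr rfl fun j _ => Finset.sum_congr rfl fun t _ => by ring
      rw [hswap]
      have hVbound : ∑ j, (∑ t, w i t * p t j) * U j i ≤ (∑ t, w i t) * V := by
        have hV' := hV i _ (hpbar i hpos)
        calc ∑ j, (∑ t, w i t * p t j) * U j i
            = (∑ t, w i t) * ∑ j, ((∑ t, w i t * p t j) / (∑ t, w i t)) * U j i := by
              rw [Finset.mul_sum]
              exact Finset.sum_congr rfl fun j _ => by
                field_simp
          _ ≤ (∑ t, w i t) * V := mul_le_mul_of_nonneg_left hV' hpos.le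
      have hdiff : ∀ j, |(∑ t, w i t * h t j) - (∑ t, w i t * p t j)| ≤ r * T := by
        intro j
        have hc := hcal i hpos j
        rw [div_sub_div_same, abs_div, abs_of_pos hpos] at hc
        have heq : (∑ t, w i t) / (T:ℝ) *
            (|(∑ t, w i t * p t j) - (∑ t, w i t * h t j)| / (∑ t, w i t))
            = |(∑ t, w i t * p t j) - (∑ t, w i t * h t j)| / T := by
          field_simp
        rw [heq, div_le_iff₀ hTpos] at hc
        rw [abs_sub_comm]
        exact hc
      have hsplit : ∑ j, (∑ t, w i t * h t j) * U j i
          = ∑ j, (∑ t, w i t * p t j) * U j i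
            + ∑ j, ((∑ t, w i t * h t j) - (∑ t, w i t * p t j)) * U j i := by
        rw [← Finset.sum_add_distrib]
        exact Finset.sum_congr rfl fun j _ => by ring
      rw [hsplit]
      have herr : ∑ j, ((∑ t, w i t * h t j) - (∑ t, w i t * p t j)) * U j i
          ≤ Umax * m * (r * T) := by
        calc ∑ j, ((∑ t, w i t * h t j) - (∑ t, w i t * p t j)) * U j i
            ≤ ∑ j : Fin m, (r * T) * Umax := by
              refine Finset.sum_le_sum fun j _ => ?_
              calc ((∑ t, w i t * h t j) - (∑ t, w i t * p t j)) * U j i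
                  ≤ |(∑ t, w i t * h t j) - (∑ t, w i t * p t j)| * U j i :=
                    mul_le_mul_of_nonneg_right (le_abs_self _) (hU0 j i)
                _ ≤ (r * T) * Umax :=
                    mul_le_mul (hdiff j) (hUmax j i) (hU0 j i) (by positivity)
          _ = Umax * m * (r * T) := by
              rw [Finset.sum_const, Finset.card_univ, Fintype.card_fin, nsmul_eq_mul]
              ring
      linarith
  calc ∑ i, ∑ t, w i t * (∑ j, h t j * U j i)
      ≤ ∑ i : Fin k, ((∑ t, w i t) * V + Umax * m * (r * T)) :=
        Finset.sum_le_sum fun i _ => key i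
    _ = (∑ i : Fin k, ∑ t, w i t) * V + k * (Umax * m * (r * T)) := by
        rw [Finset.sum_add_distrib, Finset.sum_const, Finset.card_univ,
          Fintype.card_fin, nsmul_eq_mul, ← Finset.sum_mul]
    _ = V * T + Umax * m * k * r * T := by
        rw [Finset.sum_comm]
        simp_rw [hwsum]
        rw [Finset.sum_const, Finset.card_univ, Fintype.card_fin, nsmul_eq_mul, mul_one]
        ring
end

section
/- Let $\pi : [k] \to [k]$ be arbitrary, let $\mathbf{h}_t \in \mathbb{R}^m$ and weights $w_i(\mathbf{p}_t) \in \{0,1\}$ with $\sum_i w_i(\mathbf{p}_t) = 1$ for $t \in [T]$, and let $U_A(\cdot, i) \in [0, U_{\max}]^m$ for $i \in [k]$. Suppose for each $i$ with $n_T(i) = \sum_t w_i(\mathbf{p}_t) > 0$: (a) $\langle \bar{\mathbf{p}}_T(i), U_A(\cdot,\pi(i)) - U_A(\cdot,i)\rangle \le 0$, and (b) $n_T(i)\|\bar{\mathbf{p}}_T(i) - \bar{\mathbf{h}}_T(i)\|_\infty \le rT$, where $\bar{\mathbf{p}}_T(i), \bar{\mathbf{h}}_T(i)$ are the $w_i$-weighted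 averages. Then $\sum_{t=1}^T \langle \mathbf{h}_t, U_A(\cdot, \pi(i_t))\rangle - \sum_{t=1}^T \langle \mathbf{h}_t, U_A(\cdot, i_t)\rangle \le 2 U_{\max}\, m\, k\, r\, T$, where $i_t$ is the unique index with $w_{i_t}(\mathbf{p}_t) = 1$. -/
open Finset in
/-- Calibrated forecasts imply no swap regret (deterministic tie-breaking core):
if for each bin the average activating forecast prefers `i` to `π(i)` (condition (a))
and the ℓ∞ calibration error is at most `r T` (condition (b)), then the swap regret
of the realized action sequence is at most `2 Umax m k r T`. -/
theorem calibration_implies_no_swap_regret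
    (k m T : ℕ)
    (π : Fin k → Fin k)
    (w : Fin k → Fin T → ℝ)              -- w i t = wᵢ(pₜ) ∈ {0,1}
    (h p : Fin T → Fin m → ℝ)
    (U : Fin m → Fin k → ℝ) (Umax r : ℝ) (hr : 0 ≤ r)
    (hw01 : ∀ i t, w i t = 0 ∨ w i t = 1)
    (hwsum : ∀ t, ∑ i, w i t = 1)
    (it : Fin T → Fin k) (hit : ∀ t, w (it t) t = 1)
    (hU0 : ∀ j i, 0 ≤ U j i) (hUmax : ∀ j i, U j i ≤ Umax)
    -- (a): average forecast activating bin i prefers i to π(i)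
    (ha : ∀ i, 0 < ∑ t, w i t →
      ∑ j, ((∑ t, w i t * p t j) / ∑ t, w i t) * (U j (π i) - U j i) ≤ 0)
    -- (b): ℓ∞ calibration error bound for each bin
    (hb : ∀ i, 0 < ∑ t, w i t → ∀ j,
      (∑ t, w i t) *
        |(∑ t, w i t * p t j) / (∑ t, w i t) -
         (∑ t, w i t * h t j) / (∑ t, w i t)| ≤ r * T) :
    (∑ t, ∑ j, h t j * U j (π (it t))) - (∑ t, ∑ j, h t j * U j (it t))
      ≤ 2 * Umax * m * k * r * T := by
  classical
  have hwnn : ∀ i t, 0 ≤ w i t := fun i t => by rcases hw01 i t with h'|h' <;> simp [h']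
  rcases Nat.eq_zero_or_pos T with hT | hT
  · subst hT; simp
  rcases Nat.eq_zero_or_pos m with hm | hm
  · subst hm; simp
  have hU0' : 0 ≤ Umax := le_trans (hU0 ⟨0, hm⟩ (it ⟨0, hT⟩)) (hUmax _ _)
  have hΔ : ∀ j i, |U j (π i) - U j i| ≤ Umax := by
    intro j i
    rw [abs_sub_le_iff]
    constructor <;> linarith [hU0 j (π i), hU0 j i, hUmax j (π i), hUmax j i]
  have hwzero : ∀ t i, i ≠ it t → w i t = 0 := by
    intro t i hne
    by_contra h0
    have h1 : w i t = 1 := (hw01 i t).resolve_left h0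
    have hsub : ({i, it t} : Finset (Fin k)).sum (fun i' => w i' t) ≤ ∑ i', w i' t :=
      Finset.sum_le_sum_of_subset_of_nonneg (Finset.subset_univ _)
        (fun x _ _ => hwnn x t)
    rw [Finset.sum_pair hne, h1, hit t, hwsum t] at hsub
    linarith
  have key : ∑ i, ∑ j, (∑ t, w i t * h t j) * (U j (π i) - U j i)
      = (∑ t, ∑ j, h t j * U j (π (it t))) - (∑ t, ∑ j, h t j * U j (it t)) := by
    simp only [Finset.sum_mul]
    have swap : (∑ i, ∑ j, ∑ t, w i t * h t j * (U j (π i) - U j i))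
        = ∑ t, ∑ i, ∑ j, w i t * h t j * (U j (π i) - U j i) := by
      calc (∑ i, ∑ j, ∑ t, w i t * h t j * (U j (π i) - U j i))
          = ∑ i, ∑ t, ∑ j, w i t * h t j * (U j (π i) - U j i) :=
            Finset.sum_congr rfl fun i _ => Finset.sum_comm
        _ = ∑ t, ∑ i, ∑ j, w i t * h t j * (U j (π i) - U j i) :=
            Finset.sum_comm
    rw [swap]
    have ht' : ∀ t, ∑ i, ∑ j, w i t * h t j * (U j (π i) - U j i)
        = ∑ j, h t j * (U j (π (it t)) - U j (it t)) := by
      intro t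
      rw [Finset.sum_eq_single (it t)]
      · simp [hit t]
      · intro i _ hne; simp [hwzero t i hne]
      · intro habs; exact absurd (Finset.mem_univ _) habs
    rw [Finset.sum_congr rfl fun t _ => ht' t]
    rw [← Finset.sum_sub_distrib]
    refine Finset.sum_congr rfl fun t _ => ?_
    rw [← Finset.sum_sub_distrib]
    exact Finset.sum_congr rfl fun j _ => by ring
  rw [← key]
  have bin : ∀ i : Fin k, ∑ j, (∑ t, w i t * h t j) * (U j (π i) - U j i)
      ≤ (m : ℝ) * (r * T * Umax) := by
    intro i
    rcases eq_or_lt_of_le (Finset.sum_nonneg fun t _ => hwnn i t) with h0 | hpos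
    · have hz : ∀ t ∈ (univ : Finset (Fin T)), w i t = 0 :=
        (Finset.sum_eq_zero_iff_of_nonneg (fun t _ => hwnn i t)).mp h0.symm
      have hz' : ∀ j, (∑ t, w i t * h t j) = 0 := fun j =>
        Finset.sum_eq_zero fun t ht => by rw [hz t ht, zero_mul]
      simp only [hz', zero_mul, Finset.sum_const_zero]
      positivity
    · set n : ℝ := ∑ t, w i t with hn
      have hne : n ≠ 0 := ne_of_gt hpos
      have decomp : ∀ j, (∑ t, w i t * h t j) * (U j (π i) - U j i)
          = n * (((∑ t, w i t * p t j) / n) * (U j (π i) - U j i))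
            + (n * ((∑ t, w i t * h t j) / n - (∑ t, w i t * p t j) / n))
              * (U j (π i) - U j i) := by
        intro j; field_simp; ring
      rw [Finset.sum_congr rfl fun j _ => decomp j, Finset.sum_add_distrib,
        ← Finset.mul_sum]
      have h1 : n * (∑ j, ((∑ t, w i t * p t j) / n) * (U j (π i) - U j i)) ≤ 0 :=
        mul_nonpos_of_nonneg_of_nonpos hpos.le (ha i hpos)
      have h2 : ∑ j, (n * ((∑ t, w i t * h t j) / n - (∑ t, w i t * p t j) / n))
            * (U j (π i) - U j i) ≤ ∑ _j : Fin m, r * T * Umax := by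
        apply Finset.sum_le_sum
        intro j _
        have habs1 : |n * ((∑ t, w i t * h t j) / n - (∑ t, w i t * p t j) / n)|
            ≤ r * T := by
          have := hb i hpos j
          rw [abs_mul, abs_of_pos hpos]
          rw [abs_sub_comm]
          exact this
        calc (n * ((∑ t, w i t * h t j) / n - (∑ t, w i t * p t j) / n))
              * (U j (π i) - U j i)
            ≤ |(n * ((∑ t, w i t * h t j) / n - (∑ t, w i t * p t j) / n))
              * (U j (π i) - U j i)| := le_abs_self _
          _ = |n * ((∑ t, w i t * h t j) / n - (∑ t, w i t * p t j) / n)|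
              * |U j (π i) - U j i| := abs_mul _ _
          _ ≤ r * T * Umax := by
              apply mul_le_mul habs1 (hΔ j i) (abs_nonneg _)
              positivity
      have h3 : (∑ _j : Fin m, r * T * Umax : ℝ) = (m : ℝ) * (r * T * Umax) := by
        simp [Finset.sum_const, mul_comm]
      linarith
  calc ∑ i, ∑ j, (∑ t, w i t * h t j) * (U j (π i) - U j i)
      ≤ ∑ _i : Fin k, (m : ℝ) * (r * T * Umax) := Finset.sum_le_sum fun i _ => bin i
    _ = (k : ℝ) * ((m : ℝ) * (r * T * Umax)) := by simp [Finset.sum_const, mul_comm]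
    _ ≤ 2 * Umax * m * k * r * T := by nlinarith [mul_nonneg (mul_nonneg (mul_nonneg (mul_nonneg hU0' (Nat.cast_nonneg m)) (Nat.cast_nonneg k)) hr) (Nat.cast_nonneg T)]
end
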